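/- The subalgebra of R consisting of elements invariant both under every automorphism μ_λ (λ ∈ ℂˣ) and under the involution σ equals the ℂ-subalgebra of R generated by the five elements t₄, t₆, t₈, t₁₀, t₁₂; moreover these five elements are algebraically independent over ℂ, so this invariant subalgebra is a polynomial ring in five variables. -/

import Mathlib

open MvPolynomial

/-- The ℂ-algebra endomorphism `μ_λ` of `R = ℂ[u₁,…,u₆]` determined by
`u₁ ↦ λ²u₁, u₂ ↦ u₂, u₃ ↦ λ⁻²u₃, u₄ ↦ λ²u₄, u₅ ↦ u₅, u₆ ↦ λ⁻²u₆`. -/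
noncomputable def mu (l : ℂˣ) : MvPolynomial (Fin 6) ℂ →ₐ[ℂ] MvPolynomial (Fin 6) ℂ :=
  aeval ![C ((l : ℂ) ^ 2) * X 0, X 1, C (((l : ℂ)⁻¹) ^ 2) * X 2,
          C ((l : ℂ) ^ 2) * X 3, X 4, C (((l : ℂ)⁻¹) ^ 2) * X 5]

/-- The ℂ-algebra involution `σ` of `R` determined by `u₁ ↔ u₃, u₄ ↔ u₆, u₂ ↦ u₂, u₅ ↦ u₅`. -/
noncomputable def sigma : MvPolynomial (Fin 6) ℂ →ₐ[ℂ] MvPolynomial (Fin 6) ℂ :=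
  aeval ![X 2, X 1, X 0, X 5, X 4, X 3]

noncomputable def t4 : MvPolynomial (Fin 6) ℂ := X 1
noncomputable def t6 : MvPolynomial (Fin 6) ℂ := X 4
noncomputable def t8 : MvPolynomial (Fin 6) ℂ := X 0 * X 2
noncomputable def t10 : MvPolynomial (Fin 6) ℂ := X 0 * X 5 + X 2 * X 3
noncomputable def t12 : MvPolynomial (Fin 6) ℂ := X 3 * X 5

/-!
`μ_λ` multiplies the monomial `u^m` by `λ^(2(m₁ + m₄ - m₃ - m₆))`, so a `μ`-invariant polynomial
is supported on balanced monomials (`m₁ + m₄ = m₃ + m₆`), and a `σ`-invariant one is half the sum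
of its symmetrized monomials `u^m + σ(u^m)`. A balanced symmetrized monomial factors as
`t₄^b t₆^e t₈^k t₁₂^j ((u₁u₆)^q + (u₃u₄)^q)`, and the power sums of `u₁u₆` and `u₃u₄` are
polynomials in their sum `t₁₀` and their product `t₈t₁₂`.

For the independence, `t₈, t₁₀, t₁₂` are the coefficients of `(u₁Z + u₄)(u₃Z + u₆)`, and every
quadratic over `ℂ` splits into linear factors, so `(t₄, …, t₁₂) : ℂ⁶ → ℂ⁵` is surjective and a
polynomial relation among them vanishes on all of `ℂ⁵`.
-/

theorem pow_add_pow_mem {A S : Type*} [CommRing A] [SetLike S A] [SubringClass S A] {s : S}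
    {x y : A} (hadd : x + y ∈ s) (hmul : x * y ∈ s) (n : ℕ) : x ^ n + y ^ n ∈ s := by
  induction n using Nat.twoStepInduction with
  | zero => simpa using add_mem (one_mem s) (one_mem s)
  | one => simpa using hadd
  | more n ih ih' =>
    have hrec : x ^ (n + 2) + y ^ (n + 2)
        = (x + y) * (x ^ (n + 1) + y ^ (n + 1)) - x * y * (x ^ n + y ^ n) := by ring
    rw [hrec]
    exact sub_mem (mul_mem hadd ih') (mul_mem hmul ih)

theorem exists_binary_quadratic_factorization {K : Type*} [Field K] [IsAlgClosed K] (a b c : K) :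
    ∃ p q r s : K, p * r = a ∧ p * s + q * r = b ∧ q * s = c := by
  by_cases ha : a = 0
  · exact ⟨0, 1, b, c, by simp [ha]⟩
  obtain ⟨z, hz⟩ := IsAlgClosed.exists_root
    (Polynomial.C a * Polynomial.X ^ 2 + Polynomial.C b * Polynomial.X + Polynomial.C c)
    (by rw [Polynomial.degree_quadratic ha]; decide)
  simp only [Polynomial.IsRoot.def, Polynomial.eval_add, Polynomial.eval_mul, Polynomial.eval_C,
    Polynomial.eval_pow, Polynomial.eval_X] at hz
  refine ⟨a, -(a * z), 1, b / a + z, mul_one a, by field_simp; ring, ?_⟩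
  field_simp
  linear_combination -hz

theorem algebraicIndependent_of_surjective_eval {K σ ι : Type*} [Field K] [Infinite K]
    {t : ι → MvPolynomial σ K} (h : Function.Surjective fun u : σ → K => fun i => eval u (t i)) :
    AlgebraicIndependent K t := by
  rw [algebraicIndependent_iff]
  intro p hp
  refine MvPolynomial.funext fun y => ?_
  obtain ⟨u, rfl⟩ := h y
  have := congrArg (aeval u) hp
  rwa [map_zero, comp_aeval_apply] at this

theorem monomial_one_eq_prod (m : Fin 6 →₀ ℕ) : (monomial m 1 : MvPolynomial (Fin 6) ℂ)
    = X 0 ^ m 0 * X 1 ^ m 1 * X 2 ^ m 2 * X 3 ^ m 3 * X 4 ^ m 4 * X 5 ^ m 5 := by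
  simp [monomial_eq, Finsupp.prod_fintype, Fin.prod_univ_six, mul_assoc]

theorem sigma_monomial_one (m : Fin 6 →₀ ℕ) : sigma (monomial m 1)
    = X 2 ^ m 0 * X 1 ^ m 1 * X 0 ^ m 2 * X 5 ^ m 3 * X 4 ^ m 4 * X 3 ^ m 5 := by
  simp [monomial_one_eq_prod, sigma]

theorem mu_monomial (l : ℂˣ) (m : Fin 6 →₀ ℕ) (c : ℂ) : mu l (monomial m c)
    = monomial m (((l : ℂ) ^ 2) ^ (m 0 + m 3) * ((l : ℂ)⁻¹ ^ 2) ^ (m 2 + m 5) * c) := by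
  have hC (k : ℂ) : (monomial m k : MvPolynomial (Fin 6) ℂ) = C k * monomial m 1 := by
    rw [C_mul_monomial, mul_one]
  rw [hC (_ * c), hC c, map_mul, monomial_one_eq_prod]
  simp only [mu]
  generalize (l : ℂ) ^ 2 = a, (l : ℂ)⁻¹ ^ 2 = b
  simp only [map_mul, map_pow, algHom_C, algebraMap_eq, aeval_X, Matrix.cons_val_zero,
    Matrix.cons_val_one, Matrix.cons_val, mul_pow, pow_add]
  ring

theorem coeff_mu (l : ℂˣ) (f : MvPolynomial (Fin 6) ℂ) (m : Fin 6 →₀ ℕ) : coeff m (mu l f)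
    = ((l : ℂ) ^ 2) ^ (m 0 + m 3) * ((l : ℂ)⁻¹ ^ 2) ^ (m 2 + m 5) * coeff m f := by
  induction f using MvPolynomial.induction_on' with
  | monomial n c =>
    rw [mu_monomial, coeff_monomial, coeff_monomial]
    split_ifs with h
    · rw [h]
    · rw [mul_zero]
  | add p q hp hq => rw [map_add, coeff_add, coeff_add, hp, hq, mul_add]

theorem balanced_of_mu_two_eq_self {f : MvPolynomial (Fin 6) ℂ}
    (hf : mu (Units.mk0 2 two_ne_zero) f = f) {m : Fin 6 →₀ ℕ} (hm : m ∈ f.support) :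
    m 0 + m 3 = m 2 + m 5 := by
  have hcoeff := congrArg (coeff m) hf
  rw [coeff_mu, Units.val_mk0, inv_pow, inv_pow] at hcoeff
  have hpow : ((2 : ℂ) ^ 2) ^ (m 0 + m 3) = ((2 : ℂ) ^ 2) ^ (m 2 + m 5) := by
    field_simp at hcoeff
    exact mul_right_cancel₀ (mem_support_iff.mp hm) hcoeff
  norm_num at hpow
  exact (pow_right_inj₀ (by norm_num) (by norm_num)).1
    (by exact_mod_cast hpow : (4 : ℕ) ^ _ = 4 ^ _)

noncomputable abbrev generators : Set (MvPolynomial (Fin 6) ℂ) := {t4, t6, t8, t10, t12}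

noncomputable def invariants : Subalgebra ℂ (MvPolynomial (Fin 6) ℂ) :=
  (⨅ l, AlgHom.equalizer (mu l) (AlgHom.id ℂ _)) ⊓ AlgHom.equalizer sigma (AlgHom.id ℂ _)

theorem mem_invariants {f : MvPolynomial (Fin 6) ℂ} :
    f ∈ invariants ↔ (∀ l, mu l f = f) ∧ sigma f = f := by
  simp [invariants, Algebra.mem_inf, Algebra.mem_iInf, AlgHom.mem_equalizer]

theorem generators_subset_invariants : generators ⊆ invariants := by
  have hC (l : ℂˣ) : (C ((l : ℂ) ^ 2) * C ((l : ℂ)⁻¹ ^ 2) : MvPolynomial (Fin 6) ℂ) = 1 := by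
    rw [← C_mul, ← mul_pow, mul_inv_cancel₀ l.ne_zero, one_pow, C_1]
  rintro t (rfl | rfl | rfl | rfl | rfl) <;> refine mem_invariants.2 ⟨fun l => ?_, ?_⟩ <;>
    simp only [mu, sigma, t4, t6, t8, t10, t12, map_add, map_mul, aeval_X, Matrix.cons_val_zero,
      Matrix.cons_val_one, Matrix.cons_val] <;> grind

theorem X0X5_pow_add_X2X3_pow_mem (n : ℕ) :
    (X 0 * X 5) ^ n + (X 2 * X 3) ^ n ∈ Algebra.adjoin ℂ generators := by
  refine pow_add_pow_mem (Algebra.subset_adjoin (by simp [t10])) ?_ n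
  have hprod : (X 0 * X 5 * (X 2 * X 3) : MvPolynomial (Fin 6) ℂ) = t8 * t12 := by
    simp only [t8, t12]; ring
  rw [hprod]
  exact mul_mem (Algebra.subset_adjoin (by simp)) (Algebra.subset_adjoin (by simp))

theorem balanced_symmetrized_mem_of_le {a b c d e f : ℕ} (h : a + d = c + f) (hca : c ≤ a) :
    (X 0 ^ a * X 1 ^ b * X 2 ^ c * X 3 ^ d * X 4 ^ e * X 5 ^ f
      + X 2 ^ a * X 1 ^ b * X 0 ^ c * X 5 ^ d * X 4 ^ e * X 3 ^ f : MvPolynomial (Fin 6) ℂ)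
      ∈ Algebra.adjoin ℂ generators := by
  obtain ⟨q, rfl⟩ := Nat.exists_eq_add_of_le hca
  obtain rfl : f = d + q := by omega
  have hfactor : (X 0 ^ (c + q) * X 1 ^ b * X 2 ^ c * X 3 ^ d * X 4 ^ e * X 5 ^ (d + q)
      + X 2 ^ (c + q) * X 1 ^ b * X 0 ^ c * X 5 ^ d * X 4 ^ e * X 3 ^ (d + q) :
        MvPolynomial (Fin 6) ℂ)
      = t4 ^ b * t6 ^ e * t8 ^ c * t12 ^ d * ((X 0 * X 5) ^ q + (X 2 * X 3) ^ q) := by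
    simp only [t4, t6, t8, t12]; ring
  have hgen : ∀ t ∈ generators, t ∈ Algebra.adjoin ℂ generators :=
    fun _ ht => Algebra.subset_adjoin ht
  rw [hfactor]
  refine mul_mem (mul_mem (mul_mem (mul_mem ?_ ?_) ?_) ?_) (X0X5_pow_add_X2X3_pow_mem q) <;>
    exact pow_mem (hgen _ (by simp)) _

theorem balanced_symmetrized_mem {a b c d e f : ℕ} (h : a + d = c + f) :
    (X 0 ^ a * X 1 ^ b * X 2 ^ c * X 3 ^ d * X 4 ^ e * X 5 ^ f
      + X 2 ^ a * X 1 ^ b * X 0 ^ c * X 5 ^ d * X 4 ^ e * X 3 ^ f : MvPolynomial (Fin 6) ℂ)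
      ∈ Algebra.adjoin ℂ generators := by
  rcases le_total c a with hca | hac
  · exact balanced_symmetrized_mem_of_le h hca
  · convert balanced_symmetrized_mem_of_le (b := b) (e := e) h.symm hac using 1
    ring

theorem monomial_add_sigma_mem {m : Fin 6 →₀ ℕ} (hm : m 0 + m 3 = m 2 + m 5) :
    monomial m 1 + sigma (monomial m 1) ∈ Algebra.adjoin ℂ generators := by
  rw [sigma_monomial_one, monomial_one_eq_prod]
  exact balanced_symmetrized_mem hm

theorem add_sigma_eq_sum (f : MvPolynomial (Fin 6) ℂ) :
    f + sigma f = ∑ m ∈ f.support, C (coeff m f) * (monomial m 1 + sigma (monomial m 1)) := by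
  have hmonomial (m : Fin 6 →₀ ℕ) : monomial m (coeff m f) = C (coeff m f) * monomial m 1 := by
    rw [C_mul_monomial, mul_one]
  conv_lhs => rw [f.as_sum, map_sum, ← Finset.sum_add_distrib]
  simp only [hmonomial, map_mul, algHom_C, algebraMap_eq, mul_add]

theorem mem_adjoin_of_invariant {f : MvPolynomial (Fin 6) ℂ} (hmu : ∀ l, mu l f = f)
    (hsigma : sigma f = f) : f ∈ Algebra.adjoin ℂ generators := by
  have hsum : f + sigma f ∈ Algebra.adjoin ℂ generators := by
    rw [add_sigma_eq_sum]
    exact sum_mem fun m hm => mul_mem (Subalgebra.algebraMap_mem _ _)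
      (monomial_add_sigma_mem (balanced_of_mu_two_eq_self (hmu _) hm))
  have hhalf : f = (2⁻¹ : ℂ) • (f + sigma f) := by
    rw [hsigma, ← two_smul ℂ f, smul_smul, inv_mul_cancel₀ two_ne_zero, one_smul]
  rw [hhalf]
  exact Subalgebra.smul_mem _ hsum _

theorem surjective_eval_generators :
    Function.Surjective fun u : Fin 6 → ℂ => fun i => eval u (![t4, t6, t8, t10, t12] i) := by
  intro y
  obtain ⟨p, q, r, s, h8, h10, h12⟩ := exists_binary_quadratic_factorization (y 2) (y 3) (y 4)
  refine ⟨![p, y 0, r, q, y 1, s], funext fun i => ?_⟩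
  fin_cases i <;> simp [t4, t6, t8, t10, t12, h8, h12, ← h10, mul_comm]


/-- The subalgebra of elements invariant under all `μ_λ` and under `σ` is the
ℂ-subalgebra generated by `t₄, t₆, t₈, t₁₀, t₁₂`, and these five elements are
algebraically independent over ℂ. -/
theorem invariants_mu_sigma_eq_adjoin_and_algIndep :
    (∀ f : MvPolynomial (Fin 6) ℂ,
      ((∀ l : ℂˣ, mu l f = f) ∧ sigma f = f) ↔
        f ∈ Algebra.adjoin ℂ ({t4, t6, t8, t10, t12} : Set (MvPolynomial (Fin 6) ℂ))) ∧
    AlgebraicIndependent ℂ ![t4, t6, t8, t10, t12] :=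
  ⟨fun _ => ⟨fun h => mem_adjoin_of_invariant h.1 h.2,
      fun h => mem_invariants.1 (Algebra.adjoin_le generators_subset_invariants h)⟩,
    algebraicIndependent_of_surjective_eval surjective_eval_generators⟩
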